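/- Let k be a domain, A = k_{p_{ij}}[x_1,…,x_n] a skew polynomial ring, and C a commutative domain containing k. Suppose that for every i there exists j with p_{ij} ≠ 1 (no x_i is central). Then for every k-algebra automorphism g of A ⊗_k C, the constant term of g(x_i) is zero for every i. -/

import Mathlib

noncomputable section

/-- The defining relations of the skew polynomial ring `k_{p_{ij}}[x_1, …, x_n]`:
for `i < j`, `x_j * x_i` is identified with `p i j * (x_i * x_j)`. -/
def skewRel (k : Type*) [CommRing k] (n : ℕ) (p : Fin n → Fin n → k) :
    FreeAlgebra k (Fin n) → FreeAlgebra k (Fin n) → Prop := fun a b =>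
  ∃ i j : Fin n, i < j ∧ a = FreeAlgebra.ι k j * FreeAlgebra.ι k i ∧
    b = algebraMap k _ (p i j) * (FreeAlgebra.ι k i * FreeAlgebra.ι k j)

/-- The skew polynomial ring `k_{p_{ij}}[x_1, …, x_n]`. -/
abbrev SkewPoly (k : Type*) [CommRing k] (n : ℕ) (p : Fin n → Fin n → k) :=
  RingQuot (skewRel k n p)

/-- The generator `x_i` of the skew polynomial ring. -/
def SkewPoly.X (k : Type*) [CommRing k] (n : ℕ) (p : Fin n → Fin n → k) (i : Fin n) :
    SkewPoly k n p :=
  RingQuot.mkAlgHom k (skewRel k n p) (FreeAlgebra.ι k i)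
open scoped TensorProduct

/-- The counit of the skew polynomial ring, sending each generator `x_i` to `0`;
it computes the constant term of an element. -/
def SkewPoly.counit (k : Type*) [CommRing k] (n : ℕ) (p : Fin n → Fin n → k) :
    SkewPoly k n p →ₐ[k] k :=
  RingQuot.liftAlgHom k ⟨FreeAlgebra.lift k (fun _ => (0 : k)), by
    rintro x y ⟨i, j, hij, rfl, rfl⟩
    simp⟩

/-- The constant-term map of `A ⊗_k C`, the `k`-algebra map sending each
generator `x_i ⊗ 1` to `0` and `1 ⊗ c` to `c`. -/
def SkewPoly.constantTerm (k : Type*) [CommRing k] (n : ℕ) (p : Fin n → Fin n → k)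
    (C : Type*) [CommRing C] [Algebra k C] :
    (SkewPoly k n p ⊗[k] C) →ₐ[k] C :=
  (Algebra.TensorProduct.lid k C).toAlgHom.comp
    (Algebra.TensorProduct.map (SkewPoly.counit k n p) (AlgHom.id k C))

/-!
Let `p_{ij} ≠ 1`, `y = g(x_i ⊗ 1)` and `z = g(x_j ⊗ 1)`, so that `z y = p_{ij} y z` and `z ≠ 0`.
Grade `A ⊗_k C` by total degree in the `x_l`, via the dilation `x_l ↦ x_l t` into
`(A ⊗_k C)[t]`. If the constant term `c` of `y` were nonzero, comparing lowest-degree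
components gives `z_m c = p_{ij} c z_m` for the lowest nonzero component `z_m` of `z`, i.e.
`(1 - p_{ij}) c z_m = 0`. As `A ⊗_k C` is a free `C`-module on the ordered monomials (seen by
letting it act on finitely supported functions from exponent vectors to `C`), and `C` is a
domain, this forces `z_m = 0`, a contradiction.
-/

namespace Polynomial

theorem eq_zero_of_mul_eq_mul {R : Type*} [Semiring R] {w P Q : R[X]} (h : w * P = Q * w)
    (hPQ : ∀ x : R, x * P.coeff 0 = Q.coeff 0 * x → x = 0) : w = 0 := by
  have hdvd : ∀ m, X ^ m ∣ w := by
    intro m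
    induction m with
    | zero => exact one_dvd w
    | succ m ih =>
      obtain ⟨u, rfl⟩ := ih
      have hu : u * P = Q * u := (isRegular_X_pow m).left <| by
        change X ^ m * (u * P) = X ^ m * (Q * u)
        rw [← mul_assoc, h, ← mul_assoc, ← (commute_X_pow Q m).eq, mul_assoc]
      obtain ⟨v, rfl⟩ := X_dvd_iff.mpr (hPQ _ (by rw [← mul_coeff_zero, hu, mul_coeff_zero]))
      exact ⟨v, by rw [pow_succ, mul_assoc]⟩
  ext d
  exact X_pow_dvd_iff.mp (hdvd (d + 1)) d d.lt_succ_self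

theorem commute_C_of_forall_commute {R : Type*} [Semiring R] {r : R} (hr : ∀ x, Commute r x)
    (q : R[X]) : Commute (C r) q := by
  ext m
  rw [coeff_C_mul, coeff_mul_C, (hr _).eq]

theorem C_mul_X_mul_C_mul_X {R : Type*} [Semiring R] (a b : R) :
    (C a * X) * (C b * X) = C (a * b) * X ^ 2 := by
  rw [mul_assoc, ← mul_assoc X, X_mul, mul_assoc, ← mul_assoc, ← C_mul, sq]

end Polynomial

namespace SkewPoly

variable {k : Type*} [CommRing k] {n : ℕ} (p : Fin n → Fin n → k)

theorem X_mul_X {i j : Fin n} (hij : i < j) :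
    X k n p j * X k n p i = p i j • (X k n p i * X k n p j) := by
  have := RingQuot.mkAlgHom_rel k (s := skewRel k n p) ⟨i, j, hij, rfl, rfl⟩
  rwa [map_mul, map_mul, map_mul, AlgHom.commutes, ← Algebra.smul_def] at this

theorem X_mul_X_of_ne (hanti : ∀ i j, p i j * p j i = 1) {i j : Fin n} (hij : i ≠ j) :
    X k n p j * X k n p i = p i j • (X k n p i * X k n p j) := by
  rcases hij.lt_or_gt with h | h
  · exact X_mul_X p h
  · rw [X_mul_X p h, smul_smul, hanti, one_smul]

theorem adjoin_range_X : Algebra.adjoin k (Set.range (X k n p)) = ⊤ := by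
  rw [show X k n p = RingQuot.mkAlgHom k (skewRel k n p) ∘ FreeAlgebra.ι k from rfl,
    Set.range_comp, ← AlgHom.map_adjoin, FreeAlgebra.adjoin_range_ι, Algebra.map_top,
    AlgHom.range_eq_top]
  exact RingQuot.mkAlgHom_surjective k (skewRel k n p)

theorem counit_X (l : Fin n) : counit k n p (X k n p l) = 0 := by
  rw [counit, X, RingQuot.liftAlgHom_mkAlgHom_apply, FreeAlgebra.lift_ι_apply]

theorem X_mul_X_pow {a l : Fin n} (h : a < l) (m : ℕ) :
    X k n p l * X k n p a ^ m = (p a l ^ m) • (X k n p a ^ m * X k n p l) := by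
  induction m with
  | zero => simp
  | succ m ih =>
    rw [pow_succ', ← mul_assoc, X_mul_X p h, smul_mul_assoc, mul_assoc, ih, mul_smul_comm,
      smul_smul, ← pow_succ', mul_assoc]

theorem X_mul_prod_X_pow {l : Fin n} {L : List (Fin n)} (hL : L.Pairwise (· < ·)) (hl : l ∈ L)
    (e : Fin n →₀ ℕ) :
    X k n p l * (L.map fun a => X k n p a ^ e a).prod
      = (L.map fun a => if a < l then p a l ^ e a else 1).prod •
        (L.map fun a => X k n p a ^ (e + Finsupp.single l 1 : Fin n →₀ ℕ) a).prod := by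
  induction L with
  | nil => exact absurd hl List.not_mem_nil
  | cons a L ih =>
    obtain ⟨haL, hL⟩ := List.pairwise_cons.mp hL
    simp only [List.map_cons, List.prod_cons]
    rcases eq_or_ne a l with rfl | hne
    · have hfactor : (L.map fun b => if b < a then p b a ^ e b else 1).prod = 1 :=
        List.prod_eq_one fun x hx => by
          obtain ⟨b, hb, rfl⟩ := List.mem_map.mp hx
          rw [if_neg (asymm (haL b hb))]
      have hexp : (L.map fun b => X k n p b ^ (e + Finsupp.single a 1 : Fin n →₀ ℕ) b)
          = L.map fun b => X k n p b ^ e b :=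
        List.map_congr_left fun b hb => by
          rw [Finsupp.add_apply, Finsupp.single_eq_of_ne (haL b hb).ne', add_zero]
      rw [hfactor, hexp, if_neg (lt_irrefl a), one_mul, one_smul, Finsupp.add_apply,
        Finsupp.single_eq_same, pow_succ', mul_assoc]
    · have hlL : l ∈ L := (List.mem_cons.mp hl).resolve_left hne.symm
      have hal : a < l := haL l hlL
      rw [← mul_assoc, X_mul_X_pow p hal, smul_mul_assoc, mul_assoc, ih hL hlL, mul_smul_comm,
        ← smul_smul, if_pos hal, Finsupp.add_apply, Finsupp.single_eq_of_ne hne, add_zero]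

def monomial (d : Fin n →₀ ℕ) : SkewPoly k n p :=
  ((List.finRange n).map fun l => X k n p l ^ d l).prod

/-- The scalar produced by moving `x_l` into its place in the monomial `x^e`. -/
def commFactor (l : Fin n) (e : Fin n →₀ ℕ) : k :=
  ∏ a : Fin n, if a < l then p a l ^ e a else 1

theorem X_mul_monomial (l : Fin n) (e : Fin n →₀ ℕ) :
    X k n p l * monomial p e = commFactor p l e • monomial p (e + Finsupp.single l 1) := by
  rw [monomial, monomial, X_mul_prod_X_pow p (List.pairwise_lt_finRange n) (List.mem_finRange l),
    commFactor, Fin.prod_univ_def]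

theorem monomial_zero : monomial p 0 = 1 :=
  List.prod_eq_one fun x hx => by
    obtain ⟨l, -, rfl⟩ := List.mem_map.mp hx
    rw [Finsupp.coe_zero, Pi.zero_apply, pow_zero]

theorem commFactor_add (l : Fin n) (d e : Fin n →₀ ℕ) :
    commFactor p l (d + e) = commFactor p l d * commFactor p l e := by
  rw [commFactor, commFactor, commFactor, ← Finset.prod_mul_distrib]
  refine Finset.prod_congr rfl fun a _ => ?_
  split_ifs <;> simp [pow_add]

theorem commFactor_single (i l : Fin n) :
    commFactor p l (Finsupp.single i 1) = if i < l then p i l else 1 := by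
  rw [commFactor, Finset.prod_eq_single i]
  · simp
  · intro a _ hai
    simp [Finsupp.single_eq_of_ne hai]
  · simp

@[simp]
theorem commFactor_zero (l : Fin n) : commFactor p l 0 = 1 := by
  simp [commFactor]

def dilateLeft : SkewPoly k n p →ₐ[k] Polynomial (SkewPoly k n p) :=
  RingQuot.liftAlgHom k ⟨FreeAlgebra.lift k fun l => Polynomial.C (X k n p l) * Polynomial.X, by
    rintro x y ⟨i, j, hij, rfl, rfl⟩
    simp only [map_mul, FreeAlgebra.lift_ι_apply, AlgHom.commutes]
    rw [Polynomial.C_mul_X_mul_C_mul_X, Polynomial.C_mul_X_mul_C_mul_X, X_mul_X p hij,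
      ← Polynomial.smul_C, Algebra.smul_def, mul_assoc]⟩

theorem dilateLeft_X (l : Fin n) :
    dilateLeft p (X k n p l) = Polynomial.C (X k n p l) * Polynomial.X := by
  rw [dilateLeft, X, RingQuot.liftAlgHom_mkAlgHom_apply, FreeAlgebra.lift_ι_apply]
  rfl

variable (C : Type*) [CommRing C] [Algebra k C]

theorem tensor_subalgebra_eq_top {S : Subalgebra k (SkewPoly k n p ⊗[k] C)}
    (hX : ∀ l, X k n p l ⊗ₜ[k] (1 : C) ∈ S) (hC : ∀ c : C, (1 : SkewPoly k n p) ⊗ₜ[k] c ∈ S) :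
    S = ⊤ := by
  have hA : ⊤ ≤ S.comap Algebra.TensorProduct.includeLeft := by
    rw [← adjoin_range_X p, Algebra.adjoin_le_iff, Set.range_subset_iff]
    exact hX
  refine eq_top_iff.mpr fun w _ =>
    TensorProduct.induction_on w S.zero_mem (fun a c => ?_) fun _ _ => S.add_mem
  rw [← mul_one a, ← one_mul c, ← Algebra.TensorProduct.tmul_mul_tmul]
  exact S.mul_mem (hA Algebra.mem_top) (hC c)

theorem tensor_algHom_ext {R : Type*} [Semiring R] [Algebra k R]
    {f g : (SkewPoly k n p ⊗[k] C) →ₐ[k] R}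
    (hX : ∀ l, f (X k n p l ⊗ₜ[k] (1 : C)) = g (X k n p l ⊗ₜ[k] (1 : C)))
    (hC : ∀ c : C, f ((1 : SkewPoly k n p) ⊗ₜ[k] c) = g ((1 : SkewPoly k n p) ⊗ₜ[k] c)) :
    f = g :=
  AlgHom.ext fun w => by
    rw [← AlgHom.mem_equalizer, tensor_subalgebra_eq_top p C (S := AlgHom.equalizer f g) hX hC]
    exact Algebra.mem_top

theorem commute_one_tmul (c : C) (w : SkewPoly k n p ⊗[k] C) :
    Commute ((1 : SkewPoly k n p) ⊗ₜ[k] c) w := by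
  induction w using TensorProduct.induction_on with
  | zero => exact Commute.zero_right _
  | tmul a c' => exact (Commute.one_left a).tmul (Commute.all c c')
  | add w w' hw hw' => exact hw.add_right hw'

theorem X_tmul_one_mul_X_tmul_one (hanti : ∀ i j, p i j * p j i = 1) {i j : Fin n} (hij : i ≠ j) :
    (X k n p j ⊗ₜ[k] (1 : C)) * (X k n p i ⊗ₜ[k] (1 : C))
      = p i j • ((X k n p i ⊗ₜ[k] (1 : C)) * (X k n p j ⊗ₜ[k] (1 : C))) := by
  rw [Algebra.TensorProduct.tmul_mul_tmul, Algebra.TensorProduct.tmul_mul_tmul, one_mul,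
    X_mul_X_of_ne p hanti hij, TensorProduct.smul_tmul']

/-- Left multiplication by `x_l`, written in the monomial basis of `A ⊗_k C`. -/
def shift (l : Fin n) : Module.End C ((Fin n →₀ ℕ) →₀ C) :=
  Finsupp.lsum C fun d =>
    algebraMap k C (commFactor p l d) • Finsupp.lsingle (d + Finsupp.single l 1)

theorem shift_single (l : Fin n) (d : Fin n →₀ ℕ) (c : C) :
    shift p C l (Finsupp.single d c)
      = Finsupp.single (d + Finsupp.single l 1) (algebraMap k C (commFactor p l d) * c) := by
  rw [shift, Finsupp.lsum_single, LinearMap.smul_apply, Finsupp.lsingle_apply,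
    Finsupp.smul_single, smul_eq_mul]

theorem shift_mul_shift {i j : Fin n} (hij : i < j) :
    shift p C j * shift p C i = algebraMap k _ (p i j) * (shift p C i * shift p C j) := by
  refine Finsupp.lhom_ext fun d c => ?_
  have hj : commFactor p j (d + Finsupp.single i 1) = p i j * commFactor p j d := by
    rw [commFactor_add, commFactor_single, if_pos hij, mul_comm]
  have hi : commFactor p i (d + Finsupp.single j 1) = commFactor p i d := by
    rw [commFactor_add, commFactor_single, if_neg hij.asymm, mul_one]
  simp only [Module.End.mul_apply, Module.algebraMap_end_apply, shift_single, hj, hi,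
    Finsupp.smul_single, Algebra.smul_def, map_mul]
  congr 1
  · abel
  · ring

def toEnd : SkewPoly k n p →ₐ[k] Module.End C ((Fin n →₀ ℕ) →₀ C) :=
  RingQuot.liftAlgHom k ⟨FreeAlgebra.lift k (shift p C), by
    rintro x y ⟨i, j, hij, rfl, rfl⟩
    simp only [map_mul, FreeAlgebra.lift_ι_apply, AlgHom.commutes]
    exact shift_mul_shift p C hij⟩

def tensorToEnd : (SkewPoly k n p ⊗[k] C) →ₐ[k] Module.End C ((Fin n →₀ ℕ) →₀ C) :=
  Algebra.TensorProduct.lift (toEnd p C) (IsScalarTower.toAlgHom k C _)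
    fun a c => Algebra.commute_algebraMap_right c (toEnd p C a)

theorem tensorToEnd_tmul (a : SkewPoly k n p) (c : C) :
    tensorToEnd p C (a ⊗ₜ[k] c) = toEnd p C a * algebraMap C _ c :=
  Algebra.TensorProduct.lift_tmul _ _ _ _ _

theorem tensorToEnd_X_tmul_one (l : Fin n) :
    tensorToEnd p C (X k n p l ⊗ₜ[k] (1 : C)) = shift p C l := by
  rw [tensorToEnd_tmul, map_one, mul_one, toEnd, X,
    RingQuot.liftAlgHom_mkAlgHom_apply, FreeAlgebra.lift_ι_apply]

theorem tensorToEnd_one_tmul (c : C) :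
    tensorToEnd p C ((1 : SkewPoly k n p) ⊗ₜ[k] c) = algebraMap C _ c := by
  rw [tensorToEnd_tmul, map_one, one_mul]

/-- The coordinates of `w` in the monomial basis (see `ofCoeffs_coeffs`). -/
def coeffs (w : SkewPoly k n p ⊗[k] C) : (Fin n →₀ ℕ) →₀ C :=
  tensorToEnd p C w (Finsupp.single 0 1)

def ofCoeffs : ((Fin n →₀ ℕ) →₀ C) →ₗ[k] SkewPoly k n p ⊗[k] C :=
  Finsupp.lsum k fun d => TensorProduct.mk k (SkewPoly k n p) C (monomial p d)

theorem ofCoeffs_single (d : Fin n →₀ ℕ) (c : C) :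
    ofCoeffs p C (Finsupp.single d c) = monomial p d ⊗ₜ[k] c := by
  rw [ofCoeffs, Finsupp.lsum_single, TensorProduct.mk_apply]

theorem ofCoeffs_shift (l : Fin n) (v : (Fin n →₀ ℕ) →₀ C) :
    ofCoeffs p C (shift p C l v) = (X k n p l ⊗ₜ[k] 1) * ofCoeffs p C v := by
  induction v using Finsupp.induction_linear with
  | zero => simp
  | add v v' hv hv' => rw [map_add, map_add, map_add, mul_add, hv, hv']
  | single d c =>
    rw [shift_single, ofCoeffs_single, ofCoeffs_single, Algebra.TensorProduct.tmul_mul_tmul,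
      one_mul, X_mul_monomial, ← Algebra.smul_def, TensorProduct.tmul_smul,
      TensorProduct.smul_tmul']

theorem ofCoeffs_smul (c : C) (v : (Fin n →₀ ℕ) →₀ C) :
    ofCoeffs p C (c • v) = ((1 : SkewPoly k n p) ⊗ₜ[k] c) * ofCoeffs p C v := by
  induction v using Finsupp.induction_linear with
  | zero => simp
  | add v v' hv hv' => rw [smul_add, map_add, map_add, mul_add, hv, hv']
  | single d c' =>
    rw [Finsupp.smul_single, ofCoeffs_single, ofCoeffs_single,
      Algebra.TensorProduct.tmul_mul_tmul, one_mul, smul_eq_mul]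

theorem ofCoeffs_tensorToEnd (w : SkewPoly k n p ⊗[k] C) (v : (Fin n →₀ ℕ) →₀ C) :
    ofCoeffs p C (tensorToEnd p C w v) = w * ofCoeffs p C v := by
  let S : Subalgebra k (SkewPoly k n p ⊗[k] C) :=
    { carrier := {w | ∀ v, ofCoeffs p C (tensorToEnd p C w v) = w * ofCoeffs p C v}
      mul_mem' := fun {a b} ha hb v => by
        rw [map_mul, Module.End.mul_apply, ha, hb, mul_assoc]
      add_mem' := fun {a b} ha hb v => by
        rw [map_add, LinearMap.add_apply, map_add, ha, hb, add_mul]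
      algebraMap_mem' := fun r v => by
        rw [AlgHom.commutes, Module.algebraMap_end_apply, map_smul]
        exact Algebra.smul_def r (ofCoeffs p C v) }
  have hS : S = ⊤ := tensor_subalgebra_eq_top p C
    (fun l v => by rw [tensorToEnd_X_tmul_one, ofCoeffs_shift])
    (fun c v => by rw [tensorToEnd_one_tmul, Module.algebraMap_end_apply, ofCoeffs_smul])
  exact (hS ▸ Algebra.mem_top : w ∈ S) v

theorem ofCoeffs_coeffs (w : SkewPoly k n p ⊗[k] C) : ofCoeffs p C (coeffs p C w) = w := by
  rw [coeffs, ofCoeffs_tensorToEnd, ofCoeffs_single, monomial_zero,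
    ← Algebra.TensorProduct.one_def, mul_one]

theorem coeffs_one_tmul_mul (c : C) (w : SkewPoly k n p ⊗[k] C) :
    coeffs p C (((1 : SkewPoly k n p) ⊗ₜ[k] c) * w) = c • coeffs p C w := by
  rw [coeffs, coeffs, map_mul, Module.End.mul_apply, tensorToEnd_one_tmul,
    Module.algebraMap_end_apply]

theorem coeffs_X_tmul_one (l : Fin n) :
    coeffs p C (X k n p l ⊗ₜ[k] (1 : C)) = Finsupp.single (Finsupp.single l 1) 1 := by
  rw [coeffs, tensorToEnd_X_tmul_one, shift_single, commFactor_zero, map_one, mul_one, zero_add]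

theorem X_tmul_one_ne_zero [Nontrivial C] (l : Fin n) : X k n p l ⊗ₜ[k] (1 : C) ≠ 0 := by
  intro h
  have h' := coeffs_X_tmul_one p C l
  rw [h, coeffs, map_zero, LinearMap.zero_apply] at h'
  exact one_ne_zero (Finsupp.single_eq_zero.mp h'.symm)

theorem eq_zero_of_one_tmul_mul_eq [NoZeroDivisors C] {c d : C} (hcd : c ≠ d)
    {w : SkewPoly k n p ⊗[k] C}
    (h : ((1 : SkewPoly k n p) ⊗ₜ[k] c) * w = ((1 : SkewPoly k n p) ⊗ₜ[k] d) * w) : w = 0 := by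
  have hcw := congrArg (coeffs p C) h
  rw [coeffs_one_tmul_mul, coeffs_one_tmul_mul, ← sub_eq_zero, ← sub_smul] at hcw
  rw [← ofCoeffs_coeffs p C w, (smul_eq_zero.mp hcw).resolve_left (sub_ne_zero.mpr hcd),
    map_zero]

/-- `dilate w = ∑ w_m t^m`, where `w_m` is the component of `w` of total degree `m` in the `x_l`. -/
def dilate : (SkewPoly k n p ⊗[k] C) →ₐ[k] Polynomial (SkewPoly k n p ⊗[k] C) :=
  Algebra.TensorProduct.lift
    ((Polynomial.mapAlgHom Algebra.TensorProduct.includeLeft).comp (dilateLeft p))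
    (Polynomial.CAlgHom.comp Algebra.TensorProduct.includeRight)
    fun _ c => (Polynomial.commute_C_of_forall_commute (commute_one_tmul p C c) _).symm

theorem dilate_tmul (a : SkewPoly k n p) (c : C) :
    dilate p C (a ⊗ₜ[k] c)
      = (dilateLeft p a).map (Algebra.TensorProduct.includeLeft (S := k) (B := C)).toRingHom
        * Polynomial.C ((1 : SkewPoly k n p) ⊗ₜ[k] c) :=
  Algebra.TensorProduct.lift_tmul _ _ _ _ _

theorem dilate_X_tmul_one (l : Fin n) :
    dilate p C (X k n p l ⊗ₜ[k] (1 : C))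
      = Polynomial.C (X k n p l ⊗ₜ[k] (1 : C)) * Polynomial.X := by
  rw [dilate_tmul, dilateLeft_X, Polynomial.map_mul, Polynomial.map_C, Polynomial.map_X,
    ← Algebra.TensorProduct.one_def, Polynomial.C_1, mul_one]
  rfl

theorem dilate_one_tmul (c : C) :
    dilate p C ((1 : SkewPoly k n p) ⊗ₜ[k] c) = Polynomial.C ((1 : SkewPoly k n p) ⊗ₜ[k] c) := by
  rw [dilate_tmul, map_one, Polynomial.map_one, one_mul]

theorem dilate_injective : Function.Injective (dilate p C) := by
  have : (Polynomial.eval₂AlgHom (AlgHom.id k _) 1 Commute.one_right).comp (dilate p C)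
      = AlgHom.id k _ := by
    refine tensor_algHom_ext p C (fun l => ?_) fun c => ?_
    · show Polynomial.eval₂ _ 1 (dilate p C _) = _
      rw [dilate_X_tmul_one, Polynomial.eval₂_mul_X, Polynomial.eval₂_C, mul_one]
      rfl
    · show Polynomial.eval₂ _ 1 (dilate p C _) = _
      rw [dilate_one_tmul, Polynomial.eval₂_C]
      rfl
  exact Function.LeftInverse.injective (AlgHom.congr_fun this)

theorem coeff_zero_dilate (w : SkewPoly k n p ⊗[k] C) :
    (dilate p C w).coeff 0 = (1 : SkewPoly k n p) ⊗ₜ[k] constantTerm k n p C w := by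
  have : (Polynomial.eval₂AlgHom (AlgHom.id k _) 0 Commute.zero_right).comp (dilate p C)
      = Algebra.TensorProduct.includeRight.comp (constantTerm k n p C) := by
    refine tensor_algHom_ext p C (fun l => ?_) fun c => ?_
    · show Polynomial.eval₂ _ 0 (dilate p C _) = _
      simp [dilate_X_tmul_one, constantTerm, counit_X]
    · show Polynomial.eval₂ _ 0 (dilate p C _) = _
      simp [dilate_one_tmul, constantTerm]
  have hw := AlgHom.congr_fun this w
  change Polynomial.eval₂ _ 0 (dilate p C w) = _ at hw
  rwa [Polynomial.eval₂_at_zero] at hw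

theorem constantTerm_eq_zero_of_mul_eq_smul_mul [NoZeroDivisors C] {q : k}
    (hq : algebraMap k C q ≠ 1) {y z : SkewPoly k n p ⊗[k] C} (hzy : z * y = q • (y * z))
    (hz : z ≠ 0) :
    constantTerm k n p C y = 0 := by
  set c := constantTerm k n p C y
  by_contra hc
  have hcq : c ≠ algebraMap k C q * c := fun h =>
    hq (mul_right_cancel₀ hc (h.symm.trans (one_mul c).symm))
  refine hz (dilate_injective p C ?_)
  rw [map_zero]
  refine Polynomial.eq_zero_of_mul_eq_mul (P := dilate p C y) (Q := q • dilate p C y) ?_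
    fun x hx => eq_zero_of_one_tmul_mul_eq p C hcq ?_
  · rw [smul_mul_assoc, ← map_mul, ← map_mul, hzy, map_smul]
  · rwa [Polynomial.coeff_smul, coeff_zero_dilate, ← (commute_one_tmul p C c x).eq,
      ← TensorProduct.tmul_smul, Algebra.smul_def] at hx

end SkewPoly

theorem constant_term_of_automorphism_vanishes_general
    (k : Type*) [CommRing k] (n : ℕ) (p : Fin n → Fin n → k)
    (hanti : ∀ i j, p i j * p j i = 1) (hdiag : ∀ i, p i i = 1)
    (hnc : ∀ i, ∃ j, p i j ≠ 1)
    (C : Type*) [CommRing C] [IsDomain C] [Algebra k C]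
    (hinj : Function.Injective (algebraMap k C))
    (g : (SkewPoly k n p ⊗[k] C) ≃ₐ[k] (SkewPoly k n p ⊗[k] C)) (i : Fin n) :
    SkewPoly.constantTerm k n p C (g (SkewPoly.X k n p i ⊗ₜ[k] (1 : C))) = 0 := by
  obtain ⟨j, hpij⟩ := hnc i
  have hij : i ≠ j := by
    rintro rfl
    exact hpij (hdiag i)
  refine SkewPoly.constantTerm_eq_zero_of_mul_eq_smul_mul p C
    (fun h => hpij (hinj (h.trans (map_one _).symm))) (z := g (SkewPoly.X k n p j ⊗ₜ[k] 1)) ?_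
    ((map_ne_zero_iff g g.injective).mpr (SkewPoly.X_tmul_one_ne_zero p C j))
  rw [← map_mul, ← map_mul, SkewPoly.X_tmul_one_mul_X_tmul_one p C hanti hij, map_smul]

/-- Let `k` be a domain, `A = k_{p_{ij}}[x_1, …, x_n]` with no `x_i`
central, and `C` a commutative domain containing `k`.  Then for every `k`-algebra
automorphism `g` of `A ⊗_k C`, the constant term of `g (x_i ⊗ 1)` is zero for all `i`. -/
theorem constant_term_of_automorphism_vanishes
    (k : Type*) [CommRing k] [IsDomain k] (n : ℕ) (p : Fin n → Fin n → k)
    (hanti : ∀ i j, p i j * p j i = 1) (hdiag : ∀ i, p i i = 1)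
    (hnc : ∀ i, ∃ j, p i j ≠ 1)
    (C : Type*) [CommRing C] [IsDomain C] [Algebra k C]
    (hinj : Function.Injective (algebraMap k C))
    (g : (SkewPoly k n p ⊗[k] C) ≃ₐ[k] (SkewPoly k n p ⊗[k] C)) (i : Fin n) :
    SkewPoly.constantTerm k n p C (g (SkewPoly.X k n p i ⊗ₜ[k] (1 : C))) = 0 :=
  constant_term_of_automorphism_vanishes_general k n p hanti hdiag hnc C hinj g i
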